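/- Let X and Y be Banach spaces and suppose that the numerical index of X equals 1. If the ℓ₁-direct sum X ⊕₁ Y has the weak Bishop–Phelps–Bollobás property for the numerical radius witnessed by a function η, then the pair (X, Y) has the Bishop–Phelps–Bollobás–Zizler property witnessed by the function γ(ε) = η(ε/(4+ε)) for 0 < ε < 1. -/

import Mathlib

open scoped ENNReal

/-- The numerical radius of a bounded linear operator on a normed space. -/
noncomputable def numRadius {𝕂 : Type*} [RCLike 𝕂] {Z : Type*} [NormedAddCommGroup Z]
    [NormedSpace 𝕂 Z] (T : Z →L[𝕂] Z) : ℝ :=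
  sSup { r : ℝ | ∃ (z : Z) (f : Z →L[𝕂] 𝕂), ‖z‖ = 1 ∧ ‖f‖ = 1 ∧ f z = 1 ∧ r = ‖f (T z)‖ }

/-- The numerical index of a normed space. -/
noncomputable def numIndex (𝕂 : Type*) [RCLike 𝕂] (Z : Type*) [NormedAddCommGroup Z]
    [NormedSpace 𝕂 Z] : ℝ :=
  sInf { r : ℝ | ∃ T : Z →L[𝕂] Z, ‖T‖ = 1 ∧ r = numRadius T }

/-- The weak Bishop–Phelps–Bollobás property for the numerical radius, witnessed by a
function `η` on `(0,1)`. -/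
def WeakBPBpNuWith (𝕂 : Type*) [RCLike 𝕂] (Z : Type*) [NormedAddCommGroup Z]
    [NormedSpace 𝕂 Z] (η : ℝ → ℝ) : Prop :=
  ∀ ε : ℝ, 0 < ε → ε < 1 → 0 < η ε ∧
    ∀ (T : Z →L[𝕂] Z) (z₀ : Z) (f₀ : Z →L[𝕂] 𝕂),
      numRadius T = 1 → ‖z₀‖ = 1 → ‖f₀‖ = 1 → f₀ z₀ = 1 → 1 - η ε < ‖f₀ (T z₀)‖ →
      ∃ (S : Z →L[𝕂] Z) (z₁ : Z) (f₁ : Z →L[𝕂] 𝕂),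
        ‖z₁‖ = 1 ∧ ‖f₁‖ = 1 ∧ f₁ z₁ = 1 ∧ numRadius S = ‖f₁ (S z₁)‖ ∧
        ‖S - T‖ < ε ∧ ‖z₁ - z₀‖ < ε ∧ ‖f₁ - f₀‖ < ε

/-- The Bishop–Phelps–Bollobás–Zizler property witnessed by a function `γ` on `(0,1)`. -/
def BPBZpWith (𝕂 : Type*) [RCLike 𝕂] (X Y : Type*) [NormedAddCommGroup X] [NormedSpace 𝕂 X]
    [NormedAddCommGroup Y] [NormedSpace 𝕂 Y] (γ : ℝ → ℝ) : Prop :=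
  ∀ ε : ℝ, 0 < ε → ε < 1 → 0 < γ ε ∧
    ∀ (T : X →L[𝕂] Y) (x₀ : X) (y₀ : Y →L[𝕂] 𝕂),
      ‖T‖ = 1 → ‖x₀‖ = 1 → ‖y₀‖ = 1 → 1 - γ ε < ‖y₀ (T x₀)‖ →
      ∃ (S : X →L[𝕂] Y) (x₁ : X) (y₁ : Y →L[𝕂] 𝕂),
        ‖S‖ = 1 ∧ ‖x₁‖ = 1 ∧ ‖y₁‖ = 1 ∧ ‖y₁ (S x₁)‖ = 1 ∧
        ‖x₁ - x₀‖ < ε ∧ ‖y₁ - y₀‖ < ε ∧ ‖S - T‖ < ε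

section Aux
variable {𝕂 : Type*} [RCLike 𝕂] {Z : Type*} [NormedAddCommGroup Z] [NormedSpace 𝕂 Z]

lemma norm_inv_smul {z : Z} (hz : ‖z‖ ≠ 0) : ‖(((‖z‖⁻¹ : ℝ) : 𝕂)) • z‖ = 1 := by
  rw [norm_smul, RCLike.norm_ofReal, abs_of_nonneg (by positivity), inv_mul_cancel₀ hz]

lemma numRadius_nonneg (T : Z →L[𝕂] Z) : 0 ≤ numRadius T := by
  apply Real.sSup_nonneg
  rintro r ⟨z, f, -, -, -, rfl⟩
  positivity

lemma numRadius_bddAbove (T : Z →L[𝕂] Z) :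
    BddAbove { r : ℝ | ∃ (z : Z) (f : Z →L[𝕂] 𝕂), ‖z‖ = 1 ∧ ‖f‖ = 1 ∧ f z = 1 ∧ r = ‖f (T z)‖ } := by
  refine ⟨‖T‖, ?_⟩
  rintro r ⟨z, f, hz, hf, -, rfl⟩
  calc ‖f (T z)‖ ≤ ‖f‖ * ‖T z‖ := f.le_opNorm _
    _ ≤ 1 * (‖T‖ * ‖z‖) := by rw [hf]; gcongr; exact T.le_opNorm _
    _ = ‖T‖ := by rw [hz]; ring

lemma le_numRadius (T : Z →L[𝕂] Z) {z : Z} {f : Z →L[𝕂] 𝕂} (hz : ‖z‖ = 1) (hf : ‖f‖ = 1)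
    (hfz : f z = 1) : ‖f (T z)‖ ≤ numRadius T :=
  le_csSup (numRadius_bddAbove T) ⟨z, f, hz, hf, hfz, rfl⟩

lemma numRadius_le (T : Z →L[𝕂] Z) {c : ℝ} (z₀ : Z) (hz₀ : ‖z₀‖ ≠ 0)
    (hc : ∀ (z : Z) (f : Z →L[𝕂] 𝕂), ‖z‖ = 1 → ‖f‖ = 1 → f z = 1 → ‖f (T z)‖ ≤ c) :
    numRadius T ≤ c := by
  set u : Z := (((‖z₀‖⁻¹ : ℝ) : 𝕂)) • z₀ with hu
  have hun : ‖u‖ = 1 := norm_inv_smul hz₀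
  obtain ⟨f, hf, hfz⟩ := exists_dual_vector 𝕂 u (by intro h; rw [h] at hun; simp at hun)
  refine csSup_le ⟨‖f (T u)‖, u, f, hun, hf, by rw [hfz, hun]; norm_num, rfl⟩ ?_
  rintro r ⟨z, f', hz, hf', hfz', rfl⟩
  exact hc z f' hz hf' hfz'

lemma norm_le_of_pairs (hX : numIndex 𝕂 Z = 1) {z₀ : Z} (hz₀ : ‖z₀‖ = 1)
    (W : Z →L[𝕂] Z) {c : ℝ} (hc0 : 0 ≤ c)
    (hbd : ∀ (z : Z) (f : Z →L[𝕂] 𝕂), ‖z‖ = 1 → ‖f‖ = 1 → f z = 1 → ‖f (W z)‖ ≤ c) :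
    ‖W‖ ≤ c := by
  by_cases hW : W = 0
  · simp [hW, hc0]
  have hWn : ‖W‖ ≠ 0 := by simpa using hW
  have hWpos : (0:ℝ) < ‖W‖ := lt_of_le_of_ne (norm_nonneg _) (Ne.symm hWn)
  set T : Z →L[𝕂] Z := (((‖W‖⁻¹ : ℝ) : 𝕂)) • W with hT
  have hTn : ‖T‖ = 1 := norm_inv_smul (𝕂 := 𝕂) hWn
  have h1 : (1:ℝ) ≤ numRadius T := by
    rw [← hX]
    refine csInf_le ⟨0, ?_⟩ ⟨T, hTn, rfl⟩
    rintro r ⟨T', -, rfl⟩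
    exact numRadius_nonneg T'
  have h2 : numRadius T ≤ ‖W‖⁻¹ * c := by
    refine numRadius_le T z₀ (by rw [hz₀]; norm_num) ?_
    intro z f hz hf hfz
    have he : f (T z) = ((‖W‖⁻¹ : ℝ) : 𝕂) * f (W z) := by
      rw [hT]; simp
    rw [he, norm_mul, RCLike.norm_ofReal, abs_of_nonneg (by positivity)]
    exact mul_le_mul_of_nonneg_left (hbd z f hz hf hfz) (by positivity)
  have := h1.trans h2
  calc ‖W‖ = ‖W‖ * 1 := by ring
    _ ≤ ‖W‖ * (‖W‖⁻¹ * c) := by gcongr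
    _ = c := by field_simp
end Aux

section Key
variable {𝕂 : Type*} [RCLike 𝕂] {X Y : Type*} [NormedAddCommGroup X] [NormedSpace 𝕂 X]
  [NormedAddCommGroup Y] [NormedSpace 𝕂 Y]

lemma key_lemma (hX : numIndex 𝕂 X = 1)
    (A : X →L[𝕂] X) (C : X →L[𝕂] Y) {ν : ℝ} (hν : 0 ≤ ν)
    (hb : ∀ (w : X) (w' : X →L[𝕂] 𝕂) (q : Y →L[𝕂] 𝕂), ‖w‖ = 1 → ‖w'‖ = 1 → w' w = 1 →
      ‖q‖ ≤ 1 → ‖w' (A w) + q (C w)‖ ≤ ν) :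
    ∀ x : X, ‖A x‖ + ‖C x‖ ≤ ν * ‖x‖ := by
  suffices H : ∀ x : X, ‖x‖ = 1 → ‖A x‖ + ‖C x‖ ≤ ν by
    intro x
    by_cases hx : ‖x‖ = 0
    · have hx0 : x = 0 := by simpa using hx
      simp [hx0]
    · have h := H ((((‖x‖⁻¹ : ℝ) : 𝕂)) • x) (norm_inv_smul hx)
      rw [map_smul, map_smul, norm_smul, norm_smul, RCLike.norm_ofReal,
        abs_of_nonneg (by positivity)] at h
      have hxpos : (0:ℝ) < ‖x‖ := lt_of_le_of_ne (norm_nonneg _) (Ne.symm hx)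
      have h2 := mul_le_mul_of_nonneg_left h (le_of_lt hxpos)
      rw [mul_add] at h2
      calc ‖A x‖ + ‖C x‖ = ‖x‖ * (‖x‖⁻¹ * ‖A x‖) + ‖x‖ * (‖x‖⁻¹ * ‖C x‖) := by
            field_simp
        _ ≤ ‖x‖ * ν := h2
        _ = ν * ‖x‖ := by ring
  intro x hx
  obtain ⟨q, hq, hqC⟩ : ∃ q : Y →L[𝕂] 𝕂, ‖q‖ ≤ 1 ∧ q (C x) = ((‖C x‖ : ℝ) : 𝕂) := by
    by_cases hC : C x = 0
    · exact ⟨0, by simp, by simp [hC]⟩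
    · obtain ⟨q, hq1, hq2⟩ := exists_dual_vector 𝕂 (C x) (norm_ne_zero_iff.mpr hC)
      exact ⟨q, le_of_eq hq1, hq2⟩
  have hmain : ∀ b : X, ‖b‖ = 1 → ‖A x + ((‖C x‖ : 𝕂)) • b‖ ≤ ν := by
    intro b hbn
    set W : X →L[𝕂] X := A + ContinuousLinearMap.smulRight (q.comp C) b with hWdef
    have hWx : W x = A x + ((‖C x‖ : 𝕂)) • b := by
      simp [hWdef, ContinuousLinearMap.smulRight_apply, hqC]
    have hW : ‖W‖ ≤ ν := by
      refine norm_le_of_pairs hX hx W hν ?_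
      intro w w' hw hw' hww
      have he : w' (W w) = w' (A w) + (q.smulRight (w' b)) (C w) := by
        simp only [hWdef, ContinuousLinearMap.add_apply, ContinuousLinearMap.smulRight_apply,
          ContinuousLinearMap.comp_apply, map_add, map_smul, smul_eq_mul]
      rw [he]
      refine hb w w' (q.smulRight (w' b)) hw hw' hww ?_
      rw [ContinuousLinearMap.norm_smulRight_apply]
      calc ‖q‖ * ‖w' b‖ ≤ 1 * (‖w'‖ * ‖b‖) := by
            gcongr; exact w'.le_opNorm b
        _ ≤ 1 := by rw [hw', hbn]; norm_num
    calc ‖A x + ((‖C x‖ : 𝕂)) • b‖ = ‖W x‖ := by rw [hWx]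
      _ ≤ ‖W‖ * ‖x‖ := W.le_opNorm x
      _ ≤ ν := by rw [hx]; simpa using hW
  by_cases hA : A x = 0
  · have := hmain x hx
    rw [hA, zero_add, norm_smul, RCLike.norm_ofReal, abs_of_nonneg (norm_nonneg _), hx,
      mul_one] at this
    rw [hA, norm_zero, zero_add]
    exact this
  · have hAn : ‖A x‖ ≠ 0 := by simpa using hA
    have := hmain ((((‖A x‖⁻¹ : ℝ) : 𝕂)) • A x) (norm_inv_smul hAn)
    have he : A x + ((‖C x‖ : 𝕂)) • ((((‖A x‖⁻¹ : ℝ) : 𝕂)) • A x)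
        = ((1 + ‖C x‖ * ‖A x‖⁻¹ : ℝ) : 𝕂) • A x := by
      rw [smul_smul]
      push_cast
      rw [add_smul, one_smul]
    rw [he, norm_smul, RCLike.norm_ofReal, abs_of_nonneg (by positivity)] at this
    have h3 : (1 + ‖C x‖ * ‖A x‖⁻¹) * ‖A x‖ = ‖A x‖ + ‖C x‖ := by
      field_simp
    rw [h3] at this
    exact this
end Key

section Prod
variable (𝕂 : Type*) [RCLike 𝕂] (X Y : Type*) [NormedAddCommGroup X] [NormedSpace 𝕂 X]
  [NormedAddCommGroup Y] [NormedSpace 𝕂 Y]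

noncomputable def iotaX : X →L[𝕂] WithLp 1 (X × Y) :=
  ((WithLp.prodContinuousLinearEquiv 1 𝕂 X Y).symm : (X × Y) →L[𝕂] WithLp 1 (X × Y)).comp
    (ContinuousLinearMap.inl 𝕂 X Y)

noncomputable def iotaY : Y →L[𝕂] WithLp 1 (X × Y) :=
  ((WithLp.prodContinuousLinearEquiv 1 𝕂 X Y).symm : (X × Y) →L[𝕂] WithLp 1 (X × Y)).comp
    (ContinuousLinearMap.inr 𝕂 X Y)

variable {𝕂 X Y}

lemma normL1 (z : WithLp 1 (X × Y)) : ‖z‖ = ‖z.fst‖ + ‖z.snd‖ := by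
  rw [WithLp.prod_norm_eq_add (by norm_num)]
  norm_num

@[simp] lemma iotaX_fst (x : X) : (iotaX 𝕂 X Y x).fst = x := rfl
@[simp] lemma iotaX_snd (x : X) : (iotaX 𝕂 X Y x).snd = (0 : Y) := rfl
@[simp] lemma iotaY_fst (y : Y) : (iotaY 𝕂 X Y y).fst = (0 : X) := rfl
@[simp] lemma iotaY_snd (y : Y) : (iotaY 𝕂 X Y y).snd = y := rfl

lemma norm_iotaX (x : X) : ‖iotaX 𝕂 X Y x‖ = ‖x‖ := by simp [normL1]
lemma norm_iotaY (y : Y) : ‖iotaY 𝕂 X Y y‖ = ‖y‖ := by simp [normL1]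

@[simp] lemma prodL1_fst_sub (a b : WithLp 1 (X × Y)) : (a - b).fst = a.fst - b.fst := rfl
@[simp] lemma prodL1_snd_sub (a b : WithLp 1 (X × Y)) : (a - b).snd = a.snd - b.snd := rfl

lemma decompZ (z : WithLp 1 (X × Y)) : iotaX 𝕂 X Y z.fst + iotaY 𝕂 X Y z.snd = z := by
  apply (WithLp.prodContinuousLinearEquiv 1 𝕂 X Y).injective
  ext <;> simp [iotaX, iotaY]

noncomputable def pairF (p : X →L[𝕂] 𝕂) (q : Y →L[𝕂] 𝕂) : WithLp 1 (X × Y) →L[𝕂] 𝕂 :=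
  p.comp ((ContinuousLinearMap.fst 𝕂 X Y).comp
      ((WithLp.prodContinuousLinearEquiv 1 𝕂 X Y) : WithLp 1 (X × Y) →L[𝕂] (X × Y)))
  + q.comp ((ContinuousLinearMap.snd 𝕂 X Y).comp
      ((WithLp.prodContinuousLinearEquiv 1 𝕂 X Y) : WithLp 1 (X × Y) →L[𝕂] (X × Y)))

@[simp] lemma pairF_apply (p : X →L[𝕂] 𝕂) (q : Y →L[𝕂] 𝕂) (z : WithLp 1 (X × Y)) :
    pairF p q z = p z.fst + q z.snd := rfl

lemma norm_pairF_le (p : X →L[𝕂] 𝕂) (q : Y →L[𝕂] 𝕂) : ‖pairF p q‖ ≤ max ‖p‖ ‖q‖ := by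
  refine ContinuousLinearMap.opNorm_le_bound _ (le_max_of_le_left (norm_nonneg _)) fun z => ?_
  rw [pairF_apply, normL1]
  calc ‖p z.fst + q z.snd‖ ≤ ‖p‖ * ‖z.fst‖ + ‖q‖ * ‖z.snd‖ :=
        (norm_add_le _ _).trans (by gcongr <;> [exact p.le_opNorm _; exact q.le_opNorm _])
    _ ≤ max ‖p‖ ‖q‖ * ‖z.fst‖ + max ‖p‖ ‖q‖ * ‖z.snd‖ := by
        gcongr <;> [exact le_max_left _ _; exact le_max_right _ _]
    _ = max ‖p‖ ‖q‖ * (‖z.fst‖ + ‖z.snd‖) := by ring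
end Prod


section PairBound
variable {𝕂 : Type*} [RCLike 𝕂] {X Y : Type*} [NormedAddCommGroup X] [NormedSpace 𝕂 X]
  [NormedAddCommGroup Y] [NormedSpace 𝕂 Y]

lemma pair_bound (St : WithLp 1 (X × Y) →L[𝕂] WithLp 1 (X × Y)) {w : X} {p : X →L[𝕂] 𝕂}
    {q : Y →L[𝕂] 𝕂} (hw : ‖w‖ = 1) (hp : ‖p‖ = 1) (hpw : p w = 1) (hq : ‖q‖ ≤ 1) :
    ‖p ((St (iotaX 𝕂 X Y w)).fst) + q ((St (iotaX 𝕂 X Y w)).snd)‖ ≤ numRadius St := by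
  have h1 : pairF p q (iotaX 𝕂 X Y w) = 1 := by simp [hpw]
  have hF : ‖pairF p q‖ = 1 := by
    refine le_antisymm ((norm_pairF_le p q).trans (by rw [hp]; exact max_le le_rfl hq)) ?_
    calc (1:ℝ) = ‖pairF p q (iotaX 𝕂 X Y w)‖ := by rw [h1]; simp
      _ ≤ ‖pairF p q‖ * ‖iotaX 𝕂 X Y w‖ := (pairF p q).le_opNorm _
      _ = ‖pairF p q‖ := by rw [norm_iotaX, hw, mul_one]
  have h2 := le_numRadius St (z := iotaX 𝕂 X Y w) (f := pairF p q)
    (by rw [norm_iotaX, hw]) hF h1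
  simpa using h2
end PairBound

set_option maxHeartbeats 3000000 in
/-- If `n(X) = 1` and `X ⊕₁ Y` has the weak BPBp-nu witnessed by `η`, then `(X, Y)` has
the BPBZp witnessed by `ε ↦ η (ε / (4 + ε))`. -/
theorem bpbzp_of_weakBPBpNu_prodL1 (𝕂 : Type*) [RCLike 𝕂] (X Y : Type*)
    [NormedAddCommGroup X] [NormedSpace 𝕂 X] [CompleteSpace X]
    [NormedAddCommGroup Y] [NormedSpace 𝕂 Y] [CompleteSpace Y]
    (hX : numIndex 𝕂 X = 1) (η : ℝ → ℝ)
    (h : WeakBPBpNuWith 𝕂 (WithLp 1 (X × Y)) η) :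
    BPBZpWith 𝕂 X Y (fun ε => η (ε / (4 + ε))) := by
  intro ε hε0 hε1
  have h4 : (0:ℝ) < 4 + ε := by linarith
  set ε' : ℝ := ε / (4 + ε) with hε'def
  have hε'0 : 0 < ε' := by positivity
  have hε'5 : ε' < 1/5 := by
    rw [hε'def, div_lt_iff₀ h4]
    linarith
  have hε'1 : ε' < 1 := by linarith
  have hε'ε : ε' < ε := by
    rw [hε'def]
    exact div_lt_self hε0 (by linarith)
  have h4ε' : 4 * ε' < ε := by
    rw [hε'def, show (4:ℝ) * (ε/(4+ε)) = 4*ε/(4+ε) by ring, div_lt_iff₀ h4]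
    nlinarith
  obtain ⟨hηpos, hmain⟩ := h ε' hε'0 hε'1
  refine ⟨hηpos, ?_⟩
  intro T x₀ y₀ hT hx₀ hy₀ hval
  -- the canonical embedding of T
  set Tt : WithLp 1 (X × Y) →L[𝕂] WithLp 1 (X × Y) :=
    (iotaY 𝕂 X Y).comp (T.comp ((ContinuousLinearMap.fst 𝕂 X Y).comp
      ((WithLp.prodContinuousLinearEquiv 1 𝕂 X Y) : WithLp 1 (X × Y) →L[𝕂] (X × Y)))) with hTtdef
  have hTt_apply : ∀ z : WithLp 1 (X × Y), Tt z = iotaY 𝕂 X Y (T z.fst) := fun z => rfl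
  have hTt_norm_le : ‖Tt‖ ≤ 1 := by
    refine ContinuousLinearMap.opNorm_le_bound _ zero_le_one fun z => ?_
    rw [hTt_apply, norm_iotaY, one_mul, normL1]
    calc ‖T z.fst‖ ≤ ‖T‖ * ‖z.fst‖ := T.le_opNorm _
      _ ≤ ‖z.fst‖ + ‖z.snd‖ := by rw [hT, one_mul]; simp [norm_nonneg]
  have hx₀ne : x₀ ≠ 0 := fun h0 => by simp [h0] at hx₀
  obtain ⟨p₀, hp₀, hp₀x⟩ := exists_dual_vector 𝕂 x₀ (norm_ne_zero_iff.mpr hx₀ne)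
  have hp₀x1 : p₀ x₀ = 1 := by rw [hp₀x, hx₀]; norm_num
  set z₀ : WithLp 1 (X × Y) := iotaX 𝕂 X Y x₀ with hz₀def
  have hz₀ : ‖z₀‖ = 1 := by rw [hz₀def, norm_iotaX, hx₀]
  have hz₀ne : ‖z₀‖ ≠ 0 := by rw [hz₀]; norm_num
  set f₀ : WithLp 1 (X × Y) →L[𝕂] 𝕂 := pairF p₀ y₀ with hf₀def
  have hf₀z₀ : f₀ z₀ = 1 := by simp [hf₀def, hz₀def, hp₀x1]
  have hf₀ : ‖f₀‖ = 1 := by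
    refine le_antisymm ((norm_pairF_le p₀ y₀).trans (by rw [hp₀, hy₀]; norm_num)) ?_
    calc (1:ℝ) = ‖f₀ z₀‖ := by rw [hf₀z₀]; simp
      _ ≤ ‖f₀‖ * ‖z₀‖ := f₀.le_opNorm _
      _ = ‖f₀‖ := by rw [hz₀, mul_one]
  -- numerical radius of Tt is 1
  have hTt_rad_le : numRadius Tt ≤ 1 := by
    refine numRadius_le Tt z₀ hz₀ne fun z f hz hf hfz => ?_
    calc ‖f (Tt z)‖ ≤ ‖f‖ * ‖Tt z‖ := f.le_opNorm _
      _ ≤ 1 * (‖Tt‖ * ‖z‖) := by rw [hf]; gcongr; exact Tt.le_opNorm _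
      _ ≤ 1 := by rw [hz]; simpa using hTt_norm_le
  have hT_le_rad : ‖T‖ ≤ numRadius Tt := by
    refine ContinuousLinearMap.opNorm_le_bound' _ (numRadius_nonneg Tt) fun x hxne => ?_
    set x' : X := (((‖x‖⁻¹ : ℝ) : 𝕂)) • x with hx'def
    have hx' : ‖x'‖ = 1 := norm_inv_smul hxne
    have hTx' : T x' = ((‖x‖⁻¹ : ℝ) : 𝕂) • T x := by rw [hx'def, map_smul]
    have hx'ne : x' ≠ 0 := fun h0 => by rw [h0] at hx'; simp at hx'
    obtain ⟨p, hp, hpx⟩ := exists_dual_vector 𝕂 x' (norm_ne_zero_iff.mpr hx'ne)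
    have hpx1 : p x' = 1 := by rw [hpx, hx']; norm_num
    obtain ⟨q, hq, hqv⟩ : ∃ q : Y →L[𝕂] 𝕂, ‖q‖ ≤ 1 ∧ q (T x') = ((‖T x'‖ : ℝ) : 𝕂) := by
      by_cases hTx : T x' = 0
      · exact ⟨0, by simp, by simp [hTx]⟩
      · obtain ⟨q, hq1, hq2⟩ := exists_dual_vector 𝕂 (T x') (norm_ne_zero_iff.mpr hTx)
        exact ⟨q, le_of_eq hq1, hq2⟩
    have hb := pair_bound Tt hx' hp hpx1 hq
    have he : (Tt (iotaX 𝕂 X Y x')).fst = 0 ∧ (Tt (iotaX 𝕂 X Y x')).snd = T x' := by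
      rw [hTt_apply]; exact ⟨rfl, rfl⟩
    rw [he.1, he.2, map_zero, zero_add, hqv, RCLike.norm_ofReal,
      abs_of_nonneg (norm_nonneg _)] at hb
    rw [hTx'] at hb
    rw [norm_smul, RCLike.norm_ofReal, abs_of_nonneg (by positivity)] at hb
    have hxpos : (0:ℝ) < ‖x‖ := lt_of_le_of_ne (norm_nonneg _) (Ne.symm hxne)
    calc ‖T x‖ = ‖x‖ * (‖x‖⁻¹ * ‖T x‖) := by field_simp
      _ ≤ ‖x‖ * numRadius Tt := by gcongr
      _ = numRadius Tt * ‖x‖ := by ring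
  have hTt_rad : numRadius Tt = 1 := le_antisymm hTt_rad_le (by rw [← hT]; exact hT_le_rad)
  -- apply the weak BPBp-nu
  have hval' : 1 - η ε' < ‖f₀ (Tt z₀)‖ := by
    have he : f₀ (Tt z₀) = y₀ (T x₀) := by
      rw [hTt_apply]
      simp [hf₀def, hz₀def]
    rw [he]
    exact hval
  obtain ⟨St, z₁, f₁, hz₁, hf₁, hf₁z₁, hrad_eq, hSTt, hz₁z₀, hf₁f₀⟩ :=
    hmain Tt z₀ f₀ hTt_rad hz₀ hf₀ hf₀z₀ hval'
  -- components
  set x₁ : X := z₁.fst with hx₁def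
  set y₁ : Y := z₁.snd with hy₁def
  set g : X →L[𝕂] 𝕂 := f₁.comp (iotaX 𝕂 X Y) with hgdef
  set h' : Y →L[𝕂] 𝕂 := f₁.comp (iotaY 𝕂 X Y) with hh'def
  have hf₁z : ∀ z : WithLp 1 (X × Y), f₁ z = g z.fst + h' z.snd := by
    intro z
    calc f₁ z = f₁ (iotaX 𝕂 X Y z.fst + iotaY 𝕂 X Y z.snd) := by rw [decompZ z]
      _ = g z.fst + h' z.snd := by rw [map_add]; rfl
  have hsum : ‖x₁‖ + ‖y₁‖ = 1 := by rw [← normL1]; exact hz₁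
  have hdist : ‖x₁ - x₀‖ + ‖y₁‖ < ε' := by
    have he : (z₁ - z₀).fst = x₁ - x₀ ∧ (z₁ - z₀).snd = y₁ := ⟨rfl, by
      show y₁ - (0:Y) = y₁; simp⟩
    have := hz₁z₀
    rw [normL1, he.1, he.2] at this
    exact this
  have hy₁ε : ‖y₁‖ < ε' := by
    have := norm_nonneg (x₁ - x₀); linarith
  have hx₁pos : (0:ℝ) < ‖x₁‖ := by linarith
  have hx₁ne : ‖x₁‖ ≠ 0 := ne_of_gt hx₁pos
  have hgn : ‖g‖ ≤ 1 := by
    refine ContinuousLinearMap.opNorm_le_bound _ zero_le_one fun x => ?_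
    calc ‖f₁ (iotaX 𝕂 X Y x)‖ ≤ ‖f₁‖ * ‖iotaX 𝕂 X Y x‖ := f₁.le_opNorm _
      _ = 1 * ‖x‖ := by rw [hf₁, norm_iotaX]
  have hh'n : ‖h'‖ ≤ 1 := by
    refine ContinuousLinearMap.opNorm_le_bound _ zero_le_one fun y => ?_
    calc ‖f₁ (iotaY 𝕂 X Y y)‖ ≤ ‖f₁‖ * ‖iotaY 𝕂 X Y y‖ := f₁.le_opNorm _
      _ = 1 * ‖y‖ := by rw [hf₁, norm_iotaY]
  -- g x₁ = ‖x₁‖ and h' y₁ = ‖y₁‖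
  have hsplit : g x₁ + h' y₁ = 1 := by rw [← hf₁z]; exact hf₁z₁
  have hre : RCLike.re (g x₁) + RCLike.re (h' y₁) = 1 := by
    rw [← map_add, hsplit]; simp
  have hgx₁le : ‖g x₁‖ ≤ ‖x₁‖ := by
    calc ‖g x₁‖ ≤ ‖g‖ * ‖x₁‖ := g.le_opNorm _
      _ ≤ 1 * ‖x₁‖ := by gcongr
      _ = ‖x₁‖ := one_mul _
  have hh'y₁le : ‖h' y₁‖ ≤ ‖y₁‖ := by
    calc ‖h' y₁‖ ≤ ‖h'‖ * ‖y₁‖ := h'.le_opNorm _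
      _ ≤ 1 * ‖y₁‖ := by gcongr
      _ = ‖y₁‖ := one_mul _
  have hregx₁ : RCLike.re (g x₁) = ‖x₁‖ := by
    have h1 : RCLike.re (g x₁) ≤ ‖g x₁‖ := RCLike.re_le_norm _
    have h2 : RCLike.re (h' y₁) ≤ ‖h' y₁‖ := RCLike.re_le_norm _
    linarith
  have hgx₁ : g x₁ = ((‖x₁‖ : ℝ) : 𝕂) := by
    have h5 : ‖g x₁‖ ≤ RCLike.re (g x₁) := by rw [hregx₁]; exact hgx₁le
    have := RCLike.re_eq_self_of_le h5
    rw [← this, hregx₁]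
  have hreh'y₁ : RCLike.re (h' y₁) = ‖y₁‖ := by
    have h1 : RCLike.re (g x₁) ≤ ‖g x₁‖ := RCLike.re_le_norm _
    have h2 : RCLike.re (h' y₁) ≤ ‖h' y₁‖ := RCLike.re_le_norm _
    linarith
  have hh'y₁ : h' y₁ = ((‖y₁‖ : ℝ) : 𝕂) := by
    have h5 : ‖h' y₁‖ ≤ RCLike.re (h' y₁) := by rw [hreh'y₁]; exact hh'y₁le
    have := RCLike.re_eq_self_of_le h5
    rw [← this, hreh'y₁]
  -- the normalized point u
  set u : X := (((‖x₁‖⁻¹ : ℝ) : 𝕂)) • x₁ with hudef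
  have hu : ‖u‖ = 1 := norm_inv_smul hx₁ne
  have hgu : g u = 1 := by
    rw [hudef, map_smul, hgx₁, smul_eq_mul, ← RCLike.ofReal_mul, inv_mul_cancel₀ hx₁ne]
    norm_num
  have hg1 : ‖g‖ = 1 := by
    refine le_antisymm hgn ?_
    calc (1:ℝ) = ‖g u‖ := by rw [hgu]; simp
      _ ≤ ‖g‖ * ‖u‖ := g.le_opNorm _
      _ = ‖g‖ := by rw [hu, mul_one]
  -- the numerical radius ν of St
  set ν : ℝ := numRadius St with hνdef
  have hν0 : 0 ≤ ν := numRadius_nonneg St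
  have hν_le_norm : ν ≤ ‖St‖ := by
    refine numRadius_le St z₀ hz₀ne fun z f hz hf hfz => ?_
    calc ‖f (St z)‖ ≤ ‖f‖ * ‖St z‖ := f.le_opNorm _
      _ ≤ 1 * (‖St‖ * ‖z‖) := by rw [hf]; gcongr; exact St.le_opNorm _
      _ = ‖St‖ := by rw [hz]; ring
  have hSt_norm : ‖St‖ < 1 + ε' := by
    calc ‖St‖ = ‖Tt + (St - Tt)‖ := by rw [show Tt + (St - Tt) = St from by abel]
      _ ≤ ‖Tt‖ + ‖St - Tt‖ := norm_add_le _ _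
      _ < 1 + ε' := add_lt_add_of_le_of_lt hTt_norm_le hSTt
  have hν_lt : ν < 1 + ε' := lt_of_le_of_lt hν_le_norm hSt_norm
  have hν_gt : 1 - ε' < ν := by
    have h1 : numRadius Tt ≤ ν + ‖Tt - St‖ := by
      refine numRadius_le Tt z₀ hz₀ne fun z f hz hf hfz => ?_
      have he : f (Tt z) = f (St z) + f ((Tt - St) z) := by
        rw [ContinuousLinearMap.sub_apply, map_sub]; ring
      calc ‖f (Tt z)‖ ≤ ‖f (St z)‖ + ‖f ((Tt - St) z)‖ := by rw [he]; exact norm_add_le _ _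
        _ ≤ ν + ‖Tt - St‖ := by
            refine add_le_add (le_numRadius St hz hf hfz) ?_
            calc ‖f ((Tt - St) z)‖ ≤ ‖f‖ * ‖(Tt - St) z‖ := f.le_opNorm _
              _ ≤ 1 * (‖Tt - St‖ * ‖z‖) := by rw [hf]; gcongr; exact (Tt - St).le_opNorm _
              _ = ‖Tt - St‖ := by rw [hz]; ring
    have h2 : ‖Tt - St‖ < ε' := by rw [norm_sub_rev]; exact hSTt
    rw [hTt_rad] at h1
    linarith
  have hνpos : (0:ℝ) < ν := by linarith
  have hνne : ν ≠ 0 := ne_of_gt hνpos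
  -- block operators A and C
  set A : X →L[𝕂] X := ((ContinuousLinearMap.fst 𝕂 X Y).comp
      ((WithLp.prodContinuousLinearEquiv 1 𝕂 X Y) : WithLp 1 (X × Y) →L[𝕂] (X × Y))).comp
      (St.comp (iotaX 𝕂 X Y)) with hAdef
  set C : X →L[𝕂] Y := ((ContinuousLinearMap.snd 𝕂 X Y).comp
      ((WithLp.prodContinuousLinearEquiv 1 𝕂 X Y) : WithLp 1 (X × Y) →L[𝕂] (X × Y))).comp
      (St.comp (iotaX 𝕂 X Y)) with hCdef
  have hA_apply : ∀ x : X, A x = (St (iotaX 𝕂 X Y x)).fst := fun x => rfl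
  have hC_apply : ∀ x : X, C x = (St (iotaX 𝕂 X Y x)).snd := fun x => rfl
  -- A is small, C is close to T
  have hA_le : ∀ x : X, ‖A x‖ ≤ ‖St - Tt‖ * ‖x‖ := by
    intro x
    have he : A x = ((St - Tt) (iotaX 𝕂 X Y x)).fst := by
      rw [ContinuousLinearMap.sub_apply, prodL1_fst_sub, hTt_apply, iotaY_fst, sub_zero,
        hA_apply]
    rw [he]
    have h1 : ‖((St - Tt) (iotaX 𝕂 X Y x)).fst‖ ≤ ‖(St - Tt) (iotaX 𝕂 X Y x)‖ := by
      rw [normL1]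
      have := norm_nonneg ((St - Tt) (iotaX 𝕂 X Y x)).snd
      linarith
    calc ‖((St - Tt) (iotaX 𝕂 X Y x)).fst‖ ≤ ‖(St - Tt) (iotaX 𝕂 X Y x)‖ := h1
      _ ≤ ‖St - Tt‖ * ‖iotaX 𝕂 X Y x‖ := (St - Tt).le_opNorm _
      _ = ‖St - Tt‖ * ‖x‖ := by rw [norm_iotaX]
  have hCT_le : ∀ x : X, ‖C x - T x‖ ≤ ‖St - Tt‖ * ‖x‖ := by
    intro x
    have he : C x - T x = ((St - Tt) (iotaX 𝕂 X Y x)).snd := by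
      rw [ContinuousLinearMap.sub_apply, prodL1_snd_sub, hTt_apply, iotaY_snd, hC_apply, iotaX_fst]
    rw [he]
    have h1 : ‖((St - Tt) (iotaX 𝕂 X Y x)).snd‖ ≤ ‖(St - Tt) (iotaX 𝕂 X Y x)‖ := by
      rw [normL1]
      have := norm_nonneg ((St - Tt) (iotaX 𝕂 X Y x)).fst
      linarith
    calc ‖((St - Tt) (iotaX 𝕂 X Y x)).snd‖ ≤ ‖(St - Tt) (iotaX 𝕂 X Y x)‖ := h1
      _ ≤ ‖St - Tt‖ * ‖iotaX 𝕂 X Y x‖ := (St - Tt).le_opNorm _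
      _ = ‖St - Tt‖ * ‖x‖ := by rw [norm_iotaX]
  -- the key estimate from n(X) = 1
  have hAC : ∀ x : X, ‖A x‖ + ‖C x‖ ≤ ν * ‖x‖ := by
    refine key_lemma hX A C hν0 ?_
    intro w w' q hw hw' hww hq
    have := pair_bound St hw hw' hww hq
    rw [← hA_apply, ← hC_apply] at this
    exact this
  -- θ := f₁ (St (iotaX u)) and |θ| = ν
  set θ : 𝕂 := f₁ (St (iotaX 𝕂 X Y u)) with hθdef
  have hθ_split : θ = g (A u) + h' (C u) := by
    rw [hθdef, hf₁z, ← hA_apply, ← hC_apply]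
  have hf₁iu : f₁ (iotaX 𝕂 X Y u) = 1 := by
    rw [hf₁z]
    simp only [iotaX_fst, iotaX_snd, map_zero, add_zero]
    exact hgu
  have hθ_le : ‖θ‖ ≤ ν :=
    le_numRadius St (z := iotaX 𝕂 X Y u) (by rw [norm_iotaX, hu]) hf₁ hf₁iu
  have hx₁u : x₁ = ((‖x₁‖ : ℝ) : 𝕂) • u := by
    rw [hudef, smul_smul, ← RCLike.ofReal_mul, mul_inv_cancel₀ hx₁ne]
    simp
  have hSty₁ : ‖f₁ (St (iotaY 𝕂 X Y y₁))‖ ≤ ν * ‖y₁‖ := by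
    by_cases hy0 : y₁ = 0
    · simp [hy0]
    · have hy₁ne : ‖y₁‖ ≠ 0 := by simpa using hy0
      set v : Y := ((‖y₁‖⁻¹ : ℝ) : 𝕂) • y₁ with hvdef
      have hv : ‖v‖ = 1 := norm_inv_smul hy₁ne
      have hy₁v : y₁ = ((‖y₁‖ : ℝ) : 𝕂) • v := by
        rw [hvdef, smul_smul, ← RCLike.ofReal_mul, mul_inv_cancel₀ hy₁ne]
        simp
      have hh'v : f₁ (iotaY 𝕂 X Y v) = 1 := by
        have h0 : f₁ (iotaY 𝕂 X Y v) = h' v := rfl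
        rw [h0, hvdef, map_smul, hh'y₁, smul_eq_mul, ← RCLike.ofReal_mul,
          inv_mul_cancel₀ hy₁ne]
        norm_num
      have hb := le_numRadius St (z := iotaY 𝕂 X Y v) (by rw [norm_iotaY, hv]) hf₁ hh'v
      calc ‖f₁ (St (iotaY 𝕂 X Y y₁))‖ = ‖y₁‖ * ‖f₁ (St (iotaY 𝕂 X Y v))‖ := by
            conv_lhs => rw [hy₁v]
            rw [map_smul, map_smul, map_smul, smul_eq_mul, norm_mul, RCLike.norm_ofReal,
              abs_of_nonneg (norm_nonneg _)]
        _ ≤ ‖y₁‖ * ν := by gcongr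
        _ = ν * ‖y₁‖ := mul_comm _ _
  have hν_le_θ : ν ≤ ‖θ‖ := by
    have h1 : f₁ (St z₁) = ((‖x₁‖ : ℝ) : 𝕂) * θ + f₁ (St (iotaY 𝕂 X Y y₁)) := by
      conv_lhs => rw [← decompZ (𝕂 := 𝕂) z₁]
      rw [map_add, map_add]
      congr 1
      conv_lhs => rw [show (z₁.fst : X) = x₁ from rfl, hx₁u]
      rw [map_smul, map_smul, map_smul, smul_eq_mul, hθdef]
    have h2 : ν ≤ ‖x₁‖ * ‖θ‖ + ν * ‖y₁‖ := by
      calc ν = ‖f₁ (St z₁)‖ := hrad_eq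
        _ ≤ ‖((‖x₁‖ : ℝ) : 𝕂) * θ‖ + ‖f₁ (St (iotaY 𝕂 X Y y₁))‖ := by
            rw [h1]; exact norm_add_le _ _
        _ ≤ ‖x₁‖ * ‖θ‖ + ν * ‖y₁‖ := by
            rw [norm_mul, RCLike.norm_ofReal, abs_of_nonneg (norm_nonneg _)]
            exact add_le_add le_rfl hSty₁
    have hy₁eq : ‖y₁‖ = 1 - ‖x₁‖ := by linarith
    have hprod : ν * ‖y₁‖ = ν - ν * ‖x₁‖ := by rw [hy₁eq]; ring
    have hcomm : ‖x₁‖ * ‖θ‖ = ‖θ‖ * ‖x₁‖ := mul_comm _ _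
    have h3 : ν * ‖x₁‖ ≤ ‖θ‖ * ‖x₁‖ := by linarith
    exact le_of_mul_le_mul_right h3 hx₁pos
  have hθν : ‖θ‖ = ν := le_antisymm hθ_le hν_le_θ
  -- ‖g (A u)‖ + ‖C u‖ ≤ ν
  have hgAu_norm : ‖g (A u)‖ ≤ ‖St - Tt‖ := by
    calc ‖g (A u)‖ ≤ ‖g‖ * ‖A u‖ := g.le_opNorm _
      _ ≤ 1 * (‖St - Tt‖ * ‖u‖) := by
          refine mul_le_mul hgn (hA_le u) (norm_nonneg _) zero_le_one
      _ = ‖St - Tt‖ := by rw [hu]; ring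
  have hgACu : ‖g (A u)‖ + ‖C u‖ ≤ ν := by
    obtain ⟨q, hq, hqv⟩ : ∃ q : Y →L[𝕂] 𝕂, ‖q‖ ≤ 1 ∧ q (C u) = ((‖C u‖ : ℝ) : 𝕂) := by
      by_cases hC : C u = 0
      · exact ⟨0, by simp, by simp [hC]⟩
      · obtain ⟨q, hq1, hq2⟩ := exists_dual_vector 𝕂 (C u) (norm_ne_zero_iff.mpr hC)
        exact ⟨q, le_of_eq hq1, hq2⟩
    set σ : 𝕂 := if g (A u) = 0 then 1 else g (A u) / ((‖g (A u)‖ : ℝ) : 𝕂) with hσdef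
    have hσ1 : ‖σ‖ = 1 := by
      by_cases h0 : g (A u) = 0
      · simp [hσdef, h0]
      · have hne : ‖g (A u)‖ ≠ 0 := by simpa using h0
        rw [hσdef, if_neg h0, norm_div, RCLike.norm_ofReal, abs_of_nonneg (norm_nonneg _),
          div_self hne]
    have hσd : σ * ((‖g (A u)‖ : ℝ) : 𝕂) = g (A u) := by
      by_cases h0 : g (A u) = 0
      · simp [hσdef, h0]
      · have hne : ((‖g (A u)‖ : ℝ) : 𝕂) ≠ 0 := by
          simpa using h0
        rw [hσdef, if_neg h0, div_mul_cancel₀ _ hne]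
    have hq' : ‖q.smulRight σ‖ ≤ 1 := by
      rw [ContinuousLinearMap.norm_smulRight_apply, hσ1, mul_one]
      exact hq
    have hval2 : g (A u) + (q.smulRight σ) (C u) = σ * ((‖g (A u)‖ + ‖C u‖ : ℝ) : 𝕂) := by
      have h20 : (q.smulRight σ) (C u) = ((‖C u‖ : ℝ) : 𝕂) * σ := by
        rw [ContinuousLinearMap.smulRight_apply, hqv, smul_eq_mul]
      rw [h20]
      calc g (A u) + ((‖C u‖ : ℝ) : 𝕂) * σ
          = σ * ((‖g (A u)‖ : ℝ) : 𝕂) + ((‖C u‖ : ℝ) : 𝕂) * σ := by rw [hσd]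
        _ = σ * ((‖g (A u)‖ + ‖C u‖ : ℝ) : 𝕂) := by push_cast; ring
    have hb := pair_bound St hu hg1 hgu hq'
    rw [← hA_apply, ← hC_apply, hval2, norm_mul, hσ1, one_mul, RCLike.norm_ofReal] at hb
    rw [abs_of_nonneg (by positivity)] at hb
    exact hb
  have hh'Cu_le : ‖h' (C u)‖ ≤ ‖C u‖ := by
    calc ‖h' (C u)‖ ≤ ‖h'‖ * ‖C u‖ := h'.le_opNorm _
      _ ≤ 1 * ‖C u‖ := by gcongr
      _ = ‖C u‖ := one_mul _
  have hν_eq3 : ν ≤ ‖g (A u)‖ + ‖h' (C u)‖ := by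
    calc ν = ‖θ‖ := hθν.symm
      _ ≤ ‖g (A u)‖ + ‖h' (C u)‖ := by rw [hθ_split]; exact norm_add_le _ _
  have hh'Cu_eq : ‖h' (C u)‖ = ‖C u‖ := le_antisymm hh'Cu_le (by linarith)
  have hCu_pos : (0:ℝ) < ‖C u‖ := by
    have h5 : ‖St - Tt‖ < ε' := hSTt
    linarith
  have hh'Cune : h' (C u) ≠ 0 := by
    intro h0
    rw [h0, norm_zero] at hh'Cu_eq
    linarith
  -- the unit vector yhat with h' yhat = 1
  set yhat : Y := (h' (C u))⁻¹ • C u with hyhatdef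
  have hh'yhat : h' yhat = 1 := by
    rw [hyhatdef, map_smul, smul_eq_mul, inv_mul_cancel₀ hh'Cune]
  have hyhat_norm : ‖yhat‖ = 1 := by
    rw [hyhatdef, norm_smul, norm_inv, hh'Cu_eq, inv_mul_cancel₀ (ne_of_gt hCu_pos)]
  have hh'1 : ‖h'‖ = 1 := by
    refine le_antisymm hh'n ?_
    calc (1:ℝ) = ‖h' yhat‖ := by rw [hh'yhat]; simp
      _ ≤ ‖h'‖ * ‖yhat‖ := h'.le_opNorm _
      _ = ‖h'‖ := by rw [hyhat_norm, mul_one]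
  -- the operators E and S
  set E : X →L[𝕂] Y := C + (g.comp A).smulRight yhat with hEdef
  have hE_apply : ∀ x : X, E x = C x + g (A x) • yhat := fun x => rfl
  have hE_le : ‖E‖ ≤ ν := by
    refine ContinuousLinearMap.opNorm_le_bound _ hν0 fun x => ?_
    rw [hE_apply]
    have h6 : ‖g (A x)‖ ≤ ‖A x‖ := by
      calc ‖g (A x)‖ ≤ ‖g‖ * ‖A x‖ := g.le_opNorm _
        _ ≤ 1 * ‖A x‖ := by gcongr
        _ = ‖A x‖ := one_mul _
    calc ‖C x + g (A x) • yhat‖ ≤ ‖C x‖ + ‖g (A x) • yhat‖ := norm_add_le _ _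
      _ = ‖C x‖ + ‖g (A x)‖ := by rw [norm_smul, hyhat_norm, mul_one]
      _ ≤ ‖C x‖ + ‖A x‖ := by linarith
      _ ≤ ν * ‖x‖ := by linarith [hAC x]
  have hEu : h' (E u) = θ := by
    have h21a : h' (g (A u) • yhat) = g (A u) * h' yhat := by
      rw [map_smul h' (g (A u)) yhat, smul_eq_mul]
    have h21 : h' (E u) = h' (C u) + g (A u) * h' yhat := by
      rw [hE_apply, map_add, h21a]
    rw [h21, hh'yhat, mul_one, hθ_split]
    ring
  set S : X →L[𝕂] Y := ((ν⁻¹ : ℝ) : 𝕂) • E with hSdef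
  have hS_apply : ∀ x : X, S x = ((ν⁻¹ : ℝ) : 𝕂) • E x := fun x => rfl
  have hSle : ‖S‖ ≤ 1 := by
    refine ContinuousLinearMap.opNorm_le_bound _ zero_le_one fun x => ?_
    rw [hS_apply, norm_smul, RCLike.norm_ofReal, abs_of_nonneg (by positivity)]
    calc ν⁻¹ * ‖E x‖ ≤ ν⁻¹ * (ν * ‖x‖) := by
          refine mul_le_mul_of_nonneg_left ?_ (by positivity)
          calc ‖E x‖ ≤ ‖E‖ * ‖x‖ := E.le_opNorm _
            _ ≤ ν * ‖x‖ := by gcongr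
      _ = 1 * ‖x‖ := by field_simp
  have hSu_val : ‖h' (S u)‖ = 1 := by
    rw [hS_apply, map_smul, smul_eq_mul, norm_mul, RCLike.norm_ofReal,
      abs_of_nonneg (by positivity), hEu, hθν]
    field_simp
  have hS1 : ‖S‖ = 1 := by
    refine le_antisymm hSle ?_
    calc (1:ℝ) = ‖h' (S u)‖ := hSu_val.symm
      _ ≤ ‖h'‖ * ‖S u‖ := h'.le_opNorm _
      _ ≤ 1 * (‖S‖ * ‖u‖) := by
          refine mul_le_mul (le_of_eq hh'1) (S.le_opNorm u) (norm_nonneg _) zero_le_one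
      _ = ‖S‖ := by rw [hu]; ring
  -- distance estimates
  have hux₀ : ‖u - x₀‖ < ε := by
    have hx₁le1 : ‖x₁‖ ≤ 1 := by linarith [norm_nonneg y₁]
    have hinv1 : (1:ℝ) ≤ ‖x₁‖⁻¹ := (one_le_inv₀ hx₁pos).mpr hx₁le1
    have hux₁ : ‖u - x₁‖ = 1 - ‖x₁‖ := by
      have he : u - x₁ = (((‖x₁‖⁻¹ - 1 : ℝ)) : 𝕂) • x₁ := by
        rw [hudef]
        push_cast
        rw [sub_smul, one_smul]
      rw [he, norm_smul, RCLike.norm_ofReal, abs_of_nonneg (by linarith)]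
      field_simp
    calc ‖u - x₀‖ = ‖(u - x₁) + (x₁ - x₀)‖ := by rw [show (u - x₁) + (x₁ - x₀) = u - x₀ from by abel]
      _ ≤ ‖u - x₁‖ + ‖x₁ - x₀‖ := norm_add_le _ _
      _ = (1 - ‖x₁‖) + ‖x₁ - x₀‖ := by rw [hux₁]
      _ = ‖y₁‖ + ‖x₁ - x₀‖ := by rw [show (1:ℝ) - ‖x₁‖ = ‖y₁‖ from by linarith]
      _ < ε' := by linarith
      _ < ε := hε'ε
  have hh'y₀ : ‖h' - y₀‖ < ε := by
    have hle : ‖h' - y₀‖ ≤ ‖f₁ - f₀‖ := by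
      refine ContinuousLinearMap.opNorm_le_bound _ (norm_nonneg _) fun y => ?_
      have he : (h' - y₀) y = (f₁ - f₀) (iotaY 𝕂 X Y y) := by
        rw [ContinuousLinearMap.sub_apply, ContinuousLinearMap.sub_apply]
        congr 1
        show y₀ y = f₀ (iotaY 𝕂 X Y y)
        rw [hf₀def]
        simp
      rw [he]
      calc ‖(f₁ - f₀) (iotaY 𝕂 X Y y)‖ ≤ ‖f₁ - f₀‖ * ‖iotaY 𝕂 X Y y‖ := (f₁ - f₀).le_opNorm _
        _ = ‖f₁ - f₀‖ * ‖y‖ := by rw [norm_iotaY]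
    calc ‖h' - y₀‖ ≤ ‖f₁ - f₀‖ := hle
      _ < ε' := hf₁f₀
      _ < ε := hε'ε
  have hST : ‖S - T‖ < ε := by
    have hCT : ‖C - T‖ ≤ ‖St - Tt‖ := by
      refine ContinuousLinearMap.opNorm_le_bound _ (norm_nonneg _) fun x => ?_
      rw [ContinuousLinearMap.sub_apply]
      exact hCT_le x
    have hSC : ‖S - C‖ ≤ ν⁻¹ * ‖St - Tt‖ + |1 - ν| := by
      refine ContinuousLinearMap.opNorm_le_bound _ (by positivity) fun x => ?_
      have hdec : S x - C x = ((ν⁻¹ : ℝ) : 𝕂) • (g (A x) • yhat)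
          + ((((ν⁻¹ - 1 : ℝ)) : 𝕂)) • C x := by
        rw [hS_apply, hE_apply, smul_add]
        push_cast
        rw [sub_smul, one_smul]
        abel
      have h6 : ‖g (A x)‖ ≤ ‖St - Tt‖ * ‖x‖ := by
        calc ‖g (A x)‖ ≤ ‖g‖ * ‖A x‖ := g.le_opNorm _
          _ ≤ 1 * (‖St - Tt‖ * ‖x‖) := mul_le_mul hgn (hA_le x) (norm_nonneg _) zero_le_one
          _ = ‖St - Tt‖ * ‖x‖ := one_mul _
      have h7 : ‖C x‖ ≤ ν * ‖x‖ := by linarith [hAC x, norm_nonneg (A x)]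
      rw [ContinuousLinearMap.sub_apply, hdec]
      calc ‖((ν⁻¹ : ℝ) : 𝕂) • (g (A x) • yhat) + (((ν⁻¹ - 1 : ℝ)) : 𝕂) • C x‖
          ≤ ‖((ν⁻¹ : ℝ) : 𝕂) • (g (A x) • yhat)‖ + ‖(((ν⁻¹ - 1 : ℝ)) : 𝕂) • C x‖ :=
            norm_add_le _ _
        _ = ν⁻¹ * ‖g (A x)‖ + |ν⁻¹ - 1| * ‖C x‖ := by
            rw [norm_smul (((ν⁻¹ : ℝ) : 𝕂)) (g (A x) • yhat), norm_smul (g (A x)) yhat,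
              norm_smul ((((ν⁻¹ - 1 : ℝ)) : 𝕂)) (C x), hyhat_norm, mul_one,
              RCLike.norm_ofReal, RCLike.norm_ofReal,
              abs_of_nonneg (by positivity : (0:ℝ) ≤ ν⁻¹)]
        _ ≤ ν⁻¹ * (‖St - Tt‖ * ‖x‖) + |ν⁻¹ - 1| * (ν * ‖x‖) := by
            refine add_le_add (mul_le_mul_of_nonneg_left h6 (by positivity)) ?_
            exact mul_le_mul_of_nonneg_left h7 (abs_nonneg _)
        _ = (ν⁻¹ * ‖St - Tt‖ + |ν⁻¹ - 1| * ν) * ‖x‖ := by ring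
        _ = (ν⁻¹ * ‖St - Tt‖ + |1 - ν|) * ‖x‖ := by
            rw [show |ν⁻¹ - 1| * ν = |1 - ν| from ?_]
            rw [show |ν⁻¹ - 1| * ν = |ν⁻¹ - 1| * |ν| from by rw [abs_of_pos hνpos], ← abs_mul]
            congr 1
            field_simp
    have hνhalf : (1:ℝ)/2 < ν := by linarith
    have hνinv2 : ν⁻¹ < 2 := by
      have h8 : ((2:ℝ))⁻¹ < ν := by linarith
      calc ν⁻¹ < ((2:ℝ)⁻¹)⁻¹ := by
            exact inv_strictAnti₀ (by norm_num) h8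
        _ = 2 := by norm_num
    have h9 : ν⁻¹ * ‖St - Tt‖ < 2 * ε' :=
      mul_lt_mul'' hνinv2 hSTt (by positivity) (norm_nonneg _)
    have h10 : |1 - ν| < ε' := abs_lt.mpr ⟨by linarith, by linarith⟩
    calc ‖S - T‖ = ‖(S - C) + (C - T)‖ := by rw [show (S - C) + (C - T) = S - T from by abel]
      _ ≤ ‖S - C‖ + ‖C - T‖ := norm_add_le _ _
      _ ≤ (ν⁻¹ * ‖St - Tt‖ + |1 - ν|) + ‖St - Tt‖ := add_le_add hSC hCT
      _ < (2 * ε' + ε') + ε' := by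
          refine add_lt_add (add_lt_add h9 h10) hSTt
      _ = 4 * ε' := by ring
      _ < ε := h4ε'
  exact ⟨S, u, h', hS1, hu, hh'1, hSu_val, hux₀, hh'y₀, hST⟩
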